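/- arXiv:2212.06941 — 2 statements merged into one kernel-verified Lean document; each statement's English description precedes it below -/
import Mathlib

section
/- Let Γ be a rooted tree with positive edge lengths t, let b be a hanging edge incident to a vertex v, and let d ≠ b be a child edge at v, with D the set consisting of d together with all its descendants. If Γ' is obtained from Γ by the transformation T2 (detaching the subtree spanned by D from v and reattaching it at the leaf endpoint of b, keeping edge lengths), then P₂(Γ, t) > P₂(Γ', t). -/
/-! T2 changes only two terms of `2 P₂`. The edge `b` stops being hanging, which changes
`-Σ_H t² + 2 (Σ_H t)(Σ_E t)` by `t_b² - 2 t_b Σ_E t`; and `b` joins `up(e)` exactly for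
`e ∈ D`, which adds `t_b Σ_D t` to the double sum, all other ancestor relations being unchanged.
As `b ∉ D`, `t_b + Σ_D t ≤ Σ_E t`, hence
`2 (P₂(Γ') - P₂(Γ)) = t_b (t_b + Σ_D t - 2 Σ_E t) ≤ -t_b Σ_E t < 0`. -/

/-- A rooted tree with edge set `E`, encoded by its parent-edge function:
`par e = some f` if `f` is the next edge on the simple path from `e` towards the
root, and `par e = none` if `e` is incident to the root.  Acyclicity (hence, for
a finite edge set, that we really get a tree with vertex set `E ⊕ {root}`) is
guaranteed by a rank function decreasing along `par`. -/
structure EdgeRootedTree (E : Type*) where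
  par : E → Option E
  wf : ∃ rank : E → ℕ, ∀ a b, par a = some b → rank b < rank a

namespace EdgeRootedTree

variable {E : Type*}

/-- `Γ.inUp e f` : the edge `f` lies on the simple path from `e` to the root
(`f` is an ancestor of `e`, or `f = e`). -/
def inUp (Γ : EdgeRootedTree E) (e f : E) : Prop :=
  Relation.ReflTransGen (fun a b => Γ.par a = some b) e f

open scoped Classical in
/-- `up(e)` : the set of edges of the simple path from `e` to the root, `e` included. -/
noncomputable def up (Γ : EdgeRootedTree E) [Fintype E] (e : E) : Finset E :=
  Finset.univ.filter (Γ.inUp e)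

/-- An edge is hanging if its lower endpoint is a leaf distinct from the root,
i.e. if it has no child edge. -/
def IsHanging (Γ : EdgeRootedTree E) (e : E) : Prop :=
  ∀ f, Γ.par f ≠ some e

open scoped Classical in
/-- The set `H` of hanging edges. -/
noncomputable def hanging (Γ : EdgeRootedTree E) [Fintype E] : Finset E :=
  Finset.univ.filter Γ.IsHanging

/-- The second asymptotic coefficient polynomial `P₂`, defined by
`2 P₂ = -(Σ_E t)² - Σ_E t² - Σ_H t² + 2 (Σ_H t)(Σ_E t) + Σ_{e∈E} Σ_{f∈up(e)} t_e t_f`. -/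
noncomputable def P2 [Fintype E] (Γ : EdgeRootedTree E) (t : E → ℝ) : ℝ :=
  (-(∑ e, t e) ^ 2 - ∑ e, t e ^ 2 - ∑ e ∈ Γ.hanging, t e ^ 2
      + 2 * (∑ e ∈ Γ.hanging, t e) * (∑ e, t e)
      + ∑ e, ∑ f ∈ Γ.up e, t e * t f) / 2

end EdgeRootedTree

namespace EdgeRootedTree

variable {E : Type*}

open scoped Classical in
/-- The parent function of the tree obtained from `Γ` by the transformation **T2**:
the subtree consisting of the edge `d` and all its descendants is detached from the
common upper vertex of `b` and `d` and reattached at the leaf endpoint of the hanging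
edge `b`. -/
noncomputable def T2par (Γ : EdgeRootedTree E) (b d : E) : E → Option E := fun f =>
  if f = d then some b else Γ.par f

end EdgeRootedTree

namespace EdgeRootedTree

variable {E : Type*}

section Ancestry

variable (Γ : EdgeRootedTree E)

theorem not_inUp_of_par_eq_some {a c : E} (h : Γ.par a = some c) : ¬ Γ.inUp c a := by
  obtain ⟨rank, hrank⟩ := Γ.wf
  have rank_le : ∀ {x y}, Γ.inUp x y → rank y ≤ rank x := fun hxy => by
    induction hxy with
    | refl => exact le_rfl
    | tail _ hstep ih => exact (hrank _ _ hstep).le.trans ih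
  exact fun hca => (rank_le hca).not_gt (hrank _ _ h)

theorem not_inUp_of_par_eq {a c : E} (h : Γ.par a = Γ.par c) (hne : a ≠ c) :
    ¬ Γ.inUp a c := by
  intro hac
  rcases hac.cases_head with rfl | ⟨x, hax, hxc⟩
  · exact hne rfl
  · exact Γ.not_inUp_of_par_eq_some (h ▸ hax) hxc

variable {Γ} in
theorem IsHanging.eq_of_inUp {b e : E} (hb : Γ.IsHanging b) (h : Γ.inUp e b) : e = b := by
  rcases h.cases_tail with rfl | ⟨c, _, hcb⟩
  · rfl
  · exact absurd hcb (hb c)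

open scoped Classical in
/-- The paper's `D`: the edge `d` together with all its descendants. -/
noncomputable def descendants [Fintype E] (d : E) : Finset E :=
  Finset.univ.filter (Γ.inUp · d)

@[simp]
theorem mem_descendants [Fintype E] {d e : E} : e ∈ Γ.descendants d ↔ Γ.inUp e d := by
  simp [descendants]

end Ancestry

section T2

variable {Γ Γ' : EdgeRootedTree E} {b d : E}

@[simp]
theorem T2par_self : T2par Γ b d d = some b := by simp [T2par]

theorem T2par_of_ne {a : E} (h : a ≠ d) : T2par Γ b d a = Γ.par a := by simp [T2par, h]

variable (hΓ' : Γ'.par = T2par Γ b d) (hd : Γ.par d = Γ.par b) (hne : d ≠ b)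
include hΓ' hd hne

theorem inUp_T2_of_inUp {e f : E} (h : Γ.inUp e f) : Γ'.inUp e f := by
  induction h using Relation.ReflTransGen.head_induction_on with
  | refl => exact .refl
  | @head a c hac _ ih =>
    by_cases had : a = d
    · subst had
      have hab : Γ'.par a = some b := by rw [hΓ', T2par_self]
      have hbc : Γ'.par b = some c := by rw [hΓ', T2par_of_ne hne.symm, ← hd, hac]
      exact .head hab (.head hbc ih)
    · exact .head (by rwa [hΓ', T2par_of_ne had]) ih

theorem inUp_T2_iff {e f : E} : Γ'.inUp e f ↔ Γ.inUp e f ∨ (Γ.inUp e d ∧ f = b) := by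
  refine ⟨fun h => ?_, ?_⟩
  · induction h using Relation.ReflTransGen.head_induction_on with
    | refl => exact .inl .refl
    | @head a c hac _ ih =>
      by_cases had : a = d
      · subst had
        rw [hΓ', T2par_self, Option.some_inj] at hac
        subst hac
        rcases ih with hcf | ⟨hca, _⟩
        · rcases hcf.cases_head with rfl | ⟨x, hcx, hxf⟩
          · exact .inr ⟨.refl, rfl⟩
          · exact .inl (.head (hd.trans hcx) hxf)
        · exact absurd hca (Γ.not_inUp_of_par_eq hd.symm hne.symm)
      · rw [hΓ', T2par_of_ne had] at hac
        exact ih.imp (.head hac) (And.imp_left (.head hac))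
  · rintro (h | ⟨h, rfl⟩)
    · exact inUp_T2_of_inUp hΓ' hd hne h
    · exact (inUp_T2_of_inUp hΓ' hd hne h).tail (by rw [hΓ', T2par_self])

theorem hanging_T2 [Fintype E] [DecidableEq E] : Γ'.hanging = Γ.hanging.erase b := by
  ext e
  simp only [hanging, Finset.mem_filter, Finset.mem_univ, true_and, Finset.mem_erase, IsHanging]
  constructor
  · intro h
    refine ⟨fun heb => h d (by rw [hΓ', T2par_self, heb]), fun f hf => ?_⟩
    by_cases hfd : f = d
    · subst hfd
      exact h b (by rw [hΓ', T2par_of_ne hne.symm, ← hd, hf])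
    · exact h f (by rw [hΓ', T2par_of_ne hfd, hf])
  · rintro ⟨heb, h⟩ f hf
    by_cases hfd : f = d
    · rw [hΓ', hfd, T2par_self, Option.some_inj] at hf
      exact heb hf.symm
    · rw [hΓ', T2par_of_ne hfd] at hf
      exact h f hf

variable [Fintype E]

theorem sum_up_T2 (hb : Γ.IsHanging b) (t : E → ℝ) :
    ∑ e, ∑ f ∈ Γ'.up e, t e * t f
      = ∑ e, ∑ f ∈ Γ.up e, t e * t f + (∑ e ∈ Γ.descendants d, t e) * t b := by
  classical
  have hup (e : E) : ∑ f ∈ Γ'.up e, t e * t f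
      = ∑ f ∈ Γ.up e, t e * t f + if Γ.inUp e d then t e * t b else 0 := by
    by_cases hed : Γ.inUp e d
    · have hbe : b ∉ Γ.up e := by
        simp only [up, Finset.mem_filter, Finset.mem_univ, true_and]
        intro heb
        exact Γ.not_inUp_of_par_eq hd.symm hne.symm (hb.eq_of_inUp heb ▸ hed)
      have : Γ'.up e = insert b (Γ.up e) := by
        ext f; simp [up, inUp_T2_iff hΓ' hd hne, hed, or_comm]
      rw [this, Finset.sum_insert hbe, if_pos hed, add_comm]
    · have : Γ'.up e = Γ.up e := by
        ext f; simp [up, inUp_T2_iff hΓ' hd hne, hed]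
      rw [this, if_neg hed, add_zero]
  rw [Finset.sum_congr rfl fun e _ => hup e, Finset.sum_add_distrib, Finset.sum_mul,
    ← Finset.sum_filter]
  rfl

theorem P2_T2 (hb : Γ.IsHanging b) (t : E → ℝ) :
    P2 Γ' t = P2 Γ t + t b * (t b + ∑ e ∈ Γ.descendants d, t e - 2 * ∑ e, t e) / 2 := by
  classical
  have hbH : b ∈ Γ.hanging := by simpa [hanging] using hb
  simp only [P2]
  rw [sum_up_T2 hΓ' hd hne hb, hanging_T2 hΓ' hd hne, Finset.sum_erase_eq_sub hbH,
    Finset.sum_erase_eq_sub hbH]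
  ring

end T2

end EdgeRootedTree

open EdgeRootedTree in
/-- Let `b` be a hanging edge of the rooted tree `Γ` incident to a
vertex `v`, and let `d ≠ b` be a child edge at `v` (so `d` and `b` have the same parent).
If `Γ'` is obtained from `Γ` by the transformation T2 (detaching the subtree spanned by
`d` and its descendants from `v` and reattaching it at the leaf endpoint of `b`, keeping
the positive edge lengths `t`), then `P₂(Γ,t) > P₂(Γ',t)`. -/
theorem T2_strictly_decreases_P2
    {E : Type*} [Fintype E] (Γ Γ' : EdgeRootedTree E) (t : E → ℝ)
    (ht : ∀ x, 0 < t x) (b d : E)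
    (hb : Γ.IsHanging b) (hd : Γ.par d = Γ.par b) (hne : d ≠ b)
    (hΓ' : Γ'.par = T2par Γ b d) :
    P2 Γ' t < P2 Γ t := by
  classical
  have hbD : b ∉ Γ.descendants d := by
    simpa using Γ.not_inUp_of_par_eq hd.symm hne.symm
  have hsum : t b + ∑ e ∈ Γ.descendants d, t e ≤ ∑ e, t e := by
    rw [← Finset.sum_insert hbD]
    exact Finset.sum_le_univ_sum_of_nonneg fun x => (ht x).le
  have hD : 0 ≤ ∑ e ∈ Γ.descendants d, t e := Finset.sum_nonneg fun x _ => (ht x).le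
  have hneg : t b * (t b + ∑ e ∈ Γ.descendants d, t e - 2 * ∑ e, t e) < 0 :=
    mul_neg_of_pos_of_neg (ht b) (by linarith [ht b])
  rw [P2_T2 hΓ' hd hne hb]
  linarith
end

section
/- Let n ≤ 5 and let t₁, …, t_n be arbitrary positive real numbers. If the pair (Γ, t) minimizes P₂ over all rooted trees with n edges together with all assignments of the lengths t₁, …, t_n to their edges, then Γ is a simple chain: every vertex of Γ, including the root, has degree at most 2 (the root may be an interior vertex of the chain). -/
/-!
Both parts come from local moves that strictly decrease `P₂`. If an edge `e` has two child
edges `f ≠ g`, cutting `f` off and attaching it to the root keeps the set of hanging edges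
(`e` still has the child `g`) and shortens every path to the root through `f`, so the term
`Σ_e Σ_{f ∈ up e} t_e t_f` drops. If the root has two edges `f ≠ g` with `g` hanging, moving
`f` below `g` removes `g` from `H`, which changes `2 P₂` by `t_g (t_g + T - 2 Σ_E t)`, where
`T ≥ t_f` is the total length of the subtree of `f`; this is negative because `t_g + T ≤ Σ_E t`.
Finally, when every one of `k` root edges has a child there are at least `2k` edges, so with
at most five edges, three root edges would include a hanging one.
-/

namespace EdgeRootedTree

open Finset

variable {E : Type*} (Γ : EdgeRootedTree E)

lemma not_inUp_of_par {a b : E} (h : Γ.par a = some b) : ¬ Γ.inUp b a := by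
  obtain ⟨rank, hrank⟩ := Γ.wf
  have rank_anti : ∀ {x y}, Γ.inUp x y → rank y ≤ rank x := fun hxy => by
    induction hxy with
    | refl => rfl
    | tail _ hstep ih => exact (hrank _ _ hstep).le.trans ih
  exact fun hba => (rank_anti hba).not_gt (hrank a b h)

@[simp]
lemma inUp_refl (a : E) : Γ.inUp a a := .refl

lemma inUp_head {a b c : E} (h : Γ.par a = some b) (hbc : Γ.inUp b c) : Γ.inUp a c :=
  .head h hbc

lemma inUp_of_par_of_ne {a b c : E} (h : Γ.par a = some b) (hac : Γ.inUp a c)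
    (hne : a ≠ c) : Γ.inUp b c := by
  rcases hac.cases_head with rfl | ⟨d, hd, hdc⟩
  · exact absurd rfl hne
  · obtain rfl : b = d := Option.some_inj.mp (h.symm.trans hd)
    exact hdc

lemma eq_of_inUp_of_par_eq_none {a c : E} (h : Γ.par a = none) (hac : Γ.inUp a c) : a = c := by
  rcases hac.cases_head with rfl | ⟨d, hd, -⟩
  · rfl
  · rw [h] at hd; cases hd

open scoped Classical in
/-- Move the edge `f`, with everything below it, under the edge `p` (to the root if
`p = none`); `hp` says that `p` does not lie below `f`. -/
noncomputable def reparent (f : E) (p : Option E) (hp : ∀ g ∈ p, ¬ Γ.inUp g f) :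
    EdgeRootedTree E where
  par x := if x = f then p else Γ.par x
  wf := by
    obtain ⟨rank, hrank⟩ := Γ.wf
    -- lift the subtree of `f` above the rank of its new parent
    refine ⟨fun x => if Γ.inUp x f then rank x + p.elim 0 (rank · + 1) else rank x,
      fun a b hab => ?_⟩
    by_cases haf : a = f
    · subst haf
      simp only [if_pos] at hab
      subst hab
      simp only [hp b rfl, ↓reduceIte, inUp_refl, Option.elim_some]
      omega
    · simp only [haf, if_false] at hab
      have := hrank a b hab
      by_cases hb : Γ.inUp b f
      · simp only [hb, Γ.inUp_head hab hb, if_true]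
        omega
      · simp only [hb, if_false]
        split_ifs <;> omega

variable {f : E} {p : Option E} {hp : ∀ g ∈ p, ¬ Γ.inUp g f}

@[simp]
lemma reparent_par_self : (Γ.reparent f p hp).par f = p := by
  simp [reparent]

lemma reparent_par_of_ne {x : E} (hx : x ≠ f) : (Γ.reparent f p hp).par x = Γ.par x := by
  simp [reparent, hx]

lemma reparent_par_eq_self (hp : ∀ g ∈ Γ.par f, ¬ Γ.inUp g f) :
    Γ.reparent f (Γ.par f) hp = Γ := by
  obtain ⟨par, wf⟩ := Γ
  simp only [reparent, mk.injEq]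
  funext x
  split_ifs with hx <;> simp [hx]

lemma reparent_inUp_iff_of_not_inUp {x y : E} (hx : ¬ Γ.inUp x f) :
    (Γ.reparent f p hp).inUp x y ↔ Γ.inUp x y := by
  constructor
  · intro h
    induction h using Relation.ReflTransGen.head_induction_on with
    | refl => exact Relation.ReflTransGen.refl
    | @head u v hstep _ ih =>
      have huf : u ≠ f := by rintro rfl; exact hx (Γ.inUp_refl _)
      rw [reparent_par_of_ne Γ huf] at hstep
      exact Relation.ReflTransGen.head hstep (ih fun hv => hx (Γ.inUp_head hstep hv))
  · intro h
    induction h using Relation.ReflTransGen.head_induction_on with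
    | refl => exact Relation.ReflTransGen.refl
    | @head u v hstep _ ih =>
      have huf : u ≠ f := by rintro rfl; exact hx (Γ.inUp_refl _)
      refine Relation.ReflTransGen.head ?_ (ih fun hv => hx (Γ.inUp_head hstep hv))
      rwa [reparent_par_of_ne Γ huf]

lemma reparent_inUp_of_inUp_of_inUp {x y : E} (hxy : Γ.inUp x y) (hyf : Γ.inUp y f) :
    (Γ.reparent f p hp).inUp x y := by
  induction hxy using Relation.ReflTransGen.head_induction_on with
  | refl => exact Relation.ReflTransGen.refl
  | @head u v hstep htail ih =>
    have huf : u ≠ f := by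
      rintro rfl; exact Γ.not_inUp_of_par hstep (htail.trans hyf)
    exact Relation.ReflTransGen.head (by rwa [reparent_par_of_ne Γ huf]) ih

lemma reparent_inUp_iff_of_inUp {x y : E} (hx : Γ.inUp x f) :
    (Γ.reparent f p hp).inUp x y ↔ Γ.inUp x y ∧ Γ.inUp y f ∨ ∃ g ∈ p, Γ.inUp g y := by
  constructor
  · intro h
    induction h using Relation.ReflTransGen.head_induction_on with
    | refl => exact Or.inl ⟨Relation.ReflTransGen.refl, hx⟩
    | @head u v hstep htail ih =>
      by_cases huf : u = f
      · subst huf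
        rw [reparent_par_self] at hstep
        exact Or.inr ⟨v, hstep, (reparent_inUp_iff_of_not_inUp Γ (hp v hstep)).mp htail⟩
      · rw [reparent_par_of_ne Γ huf] at hstep
        rcases ih (Γ.inUp_of_par_of_ne hstep hx huf) with ⟨hvy, hyf⟩ | hg
        · exact Or.inl ⟨Γ.inUp_head hstep hvy, hyf⟩
        · exact Or.inr hg
  · rintro (⟨hxy, hyf⟩ | ⟨g, hg, hgy⟩)
    · exact Γ.reparent_inUp_of_inUp_of_inUp hxy hyf
    · refine (Γ.reparent_inUp_of_inUp_of_inUp hx (Γ.inUp_refl _)).trans ?_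
      exact Relation.ReflTransGen.head (by simpa using hg)
        ((Γ.reparent_inUp_iff_of_not_inUp (hp g hg)).mpr hgy)

lemma reparent_isHanging_iff {x : E} :
    (Γ.reparent f p hp).IsHanging x ↔ (∀ y ≠ f, Γ.par y ≠ some x) ∧ p ≠ some x := by
  constructor
  · intro h
    exact ⟨fun y hy => by simpa [reparent_par_of_ne Γ hy] using h y, by simpa using h f⟩
  · rintro ⟨h, hpx⟩ y
    by_cases hy : y = f
    · subst hy
      simpa using hpx
    · rw [reparent_par_of_ne Γ hy]
      exact h y hy

section Finite

variable [Fintype E]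

open scoped Classical in
/-- The edges on the path from the vertex `v` to the root, where `v = some g` stands for the
lower endpoint of `g` and `v = none` for the root. -/
noncomputable def upVertex (v : Option E) : Finset E :=
  univ.filter fun y => ∃ g ∈ v, Γ.inUp g y

lemma mem_up {x y : E} : y ∈ Γ.up x ↔ Γ.inUp x y := by
  classical
  simp [up]

@[simp]
lemma upVertex_none : Γ.upVertex none = ∅ := by
  simp [upVertex]

@[simp]
lemma upVertex_some (g : E) : Γ.upVertex (some g) = Γ.up g := by
  ext y
  simp [upVertex, mem_up]

open scoped Classical in
lemma up_reparent_of_inUp {x : E} (hx : Γ.inUp x f) :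
    (Γ.reparent f p hp).up x = (Γ.up x).filter (Γ.inUp · f) ∪ Γ.upVertex p := by
  ext y
  simp [mem_up, upVertex, Γ.reparent_inUp_iff_of_inUp hx]

open scoped Classical in
lemma sum_up_reparent_of_inUp (t : E → ℝ) {x : E} (hx : Γ.inUp x f) :
    ∑ y ∈ (Γ.reparent f p hp).up x, t y =
      ∑ y ∈ (Γ.up x).filter (Γ.inUp · f), t y + ∑ y ∈ Γ.upVertex p, t y := by
  refine (Γ.up_reparent_of_inUp hx).symm ▸ sum_union (disjoint_left.mpr fun y hy hy' => ?_)
  obtain ⟨g, hg, hgy⟩ : ∃ g ∈ p, Γ.inUp g y := by simpa [upVertex] using hy'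
  exact hp g hg (hgy.trans (mem_filter.mp hy).2)

open scoped Classical in
lemma sum_up_reparent (t : E → ℝ) (x : E) :
    ∑ y ∈ (Γ.reparent f p hp).up x, t y = ∑ y ∈ Γ.up x, t y +
      if Γ.inUp x f then ∑ y ∈ Γ.upVertex p, t y - ∑ y ∈ Γ.upVertex (Γ.par f), t y else 0 := by
  split_ifs with hx
  · have hold := Γ.sum_up_reparent_of_inUp (hp := fun _ => Γ.not_inUp_of_par) t hx
    rw [reparent_par_eq_self] at hold
    rw [Γ.sum_up_reparent_of_inUp t hx, hold]
    ring
  · rw [add_zero]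
    congr 1
    ext y
    simp [mem_up, Γ.reparent_inUp_iff_of_not_inUp hx]

open scoped Classical in
lemma sum_up_mul_reparent (t : E → ℝ) :
    ∑ x, ∑ y ∈ (Γ.reparent f p hp).up x, t x * t y = ∑ x, ∑ y ∈ Γ.up x, t x * t y +
      (∑ x ∈ univ.filter (Γ.inUp · f), t x) *
        (∑ y ∈ Γ.upVertex p, t y - ∑ y ∈ Γ.upVertex (Γ.par f), t y) := by
  simp_rw [← mul_sum, sum_up_reparent, mul_add, sum_add_distrib, mul_ite, mul_zero,
    ← sum_filter, sum_mul]

theorem exists_P2_lt_of_par_eq_par (t : E → ℝ) (ht : ∀ x, 0 < t x) {e g : E}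
    (hf : Γ.par f = some e) (hg : Γ.par g = some e) (hfg : f ≠ g) :
    ∃ Γ' : EdgeRootedTree E, P2 Γ' t < P2 Γ t := by
  classical
  refine ⟨Γ.reparent f none (by simp), ?_⟩
  have hH : (Γ.reparent f none (by simp)).hanging = Γ.hanging := by
    ext x
    simp only [hanging, mem_filter, mem_univ, true_and]
    rw [reparent_isHanging_iff, IsHanging]
    constructor
    · rintro ⟨h, -⟩ y hy
      by_cases hyf : y = f
      · subst hyf
        rw [hf] at hy
        cases hy
        exact h g hfg.symm hg
      · exact h y hyf hy
    · exact fun h => ⟨fun y _ => h y, by simp⟩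
  have hD : 0 < ∑ x ∈ univ.filter (Γ.inUp · f), t x :=
    sum_pos (fun x _ => ht x) ⟨f, by simp⟩
  have he : 0 < ∑ y ∈ Γ.up e, t y := sum_pos (fun x _ => ht x) ⟨e, by simp [mem_up]⟩
  unfold P2
  rw [hH, sum_up_mul_reparent, hf, upVertex_none, upVertex_some]
  nlinarith [mul_pos hD he]

theorem exists_P2_lt_of_isHanging_of_par_eq_none (t : E → ℝ) (ht : ∀ x, 0 < t x) {g : E}
    (hf : Γ.par f = none) (hg : Γ.par g = none) (hfg : f ≠ g) (hang : Γ.IsHanging g) :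
    ∃ Γ' : EdgeRootedTree E, P2 Γ' t < P2 Γ t := by
  classical
  have hgf : ¬ Γ.inUp g f := fun h => hfg (Γ.eq_of_inUp_of_par_eq_none hg h).symm
  refine ⟨Γ.reparent f (some g) (by simpa using hgf), ?_⟩
  have hH : (Γ.reparent f (some g) (by simpa using hgf)).hanging = Γ.hanging.erase g := by
    ext x
    simp only [hanging, mem_erase, mem_filter, mem_univ, true_and]
    rw [reparent_isHanging_iff, IsHanging]
    constructor
    · rintro ⟨h, hgx⟩
      refine ⟨fun hxg => hgx (hxg ▸ rfl), fun y => ?_⟩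
      by_cases hyf : y = f
      · simp [hyf, hf]
      · exact h y hyf
    · rintro ⟨hxg, h⟩
      exact ⟨fun y _ => h y, by simpa [eq_comm] using hxg⟩
  have hup : Γ.up g = {g} := by
    ext y
    simp only [mem_up, mem_singleton]
    exact ⟨fun h => (Γ.eq_of_inUp_of_par_eq_none hg h).symm, fun h => h ▸ Γ.inUp_refl g⟩
  have hgH : g ∈ Γ.hanging := by simpa [hanging] using hang
  have hA : ∑ x ∈ univ.filter (Γ.inUp · f), t x + t g ≤ ∑ x, t x := by
    rw [add_comm, ← sum_insert (by simpa using hgf)]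
    exact sum_le_univ_sum_of_nonneg fun x => (ht x).le
  have hD : 0 < ∑ x ∈ univ.filter (Γ.inUp · f), t x :=
    sum_pos (fun x _ => ht x) ⟨f, by simp⟩
  unfold P2
  rw [hH, sum_up_mul_reparent, hf, upVertex_none, upVertex_some, hup, sum_erase_eq_sub hgH,
    sum_erase_eq_sub hgH]
  simp only [sum_singleton, sum_empty, sub_zero]
  nlinarith [ht g]

lemma exists_isHanging_of_card_lt {S : Finset E} (hS : ∀ g ∈ S, Γ.par g = none)
    (hcard : Fintype.card E < 2 * #S) : ∃ g ∈ S, Γ.IsHanging g := by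
  classical
  by_contra! hS'
  set C := univ.filter fun y => Γ.par y ∈ S.image some
  have hsub : S.image some ⊆ C.image Γ.par := by
    intro o ho
    obtain ⟨g, hgS, rfl⟩ := mem_image.mp ho
    obtain ⟨y, hy⟩ : ∃ y, Γ.par y = some g := by simpa [IsHanging] using hS' g hgS
    exact mem_image.mpr ⟨y, by simp [C, hy, hgS], hy⟩
  have hSC : #S ≤ #C := calc
    #S = #(S.image some) := (card_image_of_injective _ (Option.some_injective _)).symm
    _ ≤ #(C.image Γ.par) := card_le_card hsub
    _ ≤ #C := card_image_le
  have hdisj : Disjoint S C := disjoint_left.mpr fun y hyS hyC => by simp [C, hS y hyS] at hyC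
  have := card_le_univ (S ∪ C)
  rw [card_union_of_disjoint hdisj] at this
  omega

end Finite

end EdgeRootedTree

open EdgeRootedTree in
open scoped Classical in
/-- Let `n ≤ 5` and let `t₁,…,t_n` be arbitrary positive real numbers.
If the pair `(Γ, t)` minimizes `P₂` over all rooted trees with `n` edges together with
all assignments of the lengths `t₁,…,t_n` to their edges (i.e. all `t ∘ σ` for
permutations `σ`), then `Γ` is a simple chain: every vertex, including the root, has
degree at most `2`.  In terms of the parent-edge encoding: at most two edges are
incident to the root, and every edge has at most one child edge (the root may be an
interior vertex of the chain). -/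
theorem minimal_growth_tree_with_at_most_five_edges_is_chain
    (n : ℕ) (hn : n ≤ 5) (Γ : EdgeRootedTree (Fin n)) (t : Fin n → ℝ)
    (ht : ∀ e, 0 < t e)
    (hmin : ∀ (Γ' : EdgeRootedTree (Fin n)) (σ : Equiv.Perm (Fin n)),
      P2 Γ t ≤ P2 Γ' (t ∘ σ)) :
    (Finset.univ.filter fun f => Γ.par f = none).card ≤ 2 ∧
      ∀ e : Fin n, (Finset.univ.filter fun f => Γ.par f = some e).card ≤ 1 := by
  have hmin' : ∀ Γ' : EdgeRootedTree (Fin n), P2 Γ t ≤ P2 Γ' t := fun Γ' => hmin Γ' 1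
  constructor
  · set roots := Finset.univ.filter fun f => Γ.par f = none
    by_contra! hroots
    obtain ⟨g, hg, hang⟩ := Γ.exists_isHanging_of_card_lt (S := roots)
      (fun g hg => (Finset.mem_filter.mp hg).2) (by simp only [Fintype.card_fin]; omega)
    obtain ⟨f, hf, hfg⟩ := Finset.exists_mem_ne (s := roots) (by omega) g
    obtain ⟨Γ', hlt⟩ := Γ.exists_P2_lt_of_isHanging_of_par_eq_none t ht
      (Finset.mem_filter.mp hf).2 (Finset.mem_filter.mp hg).2 hfg hang
    exact (hmin' Γ').not_gt hlt
  · intro e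
    by_contra! hchildren
    obtain ⟨f, hf, g, hg, hfg⟩ := Finset.one_lt_card.mp hchildren
    obtain ⟨Γ', hlt⟩ := Γ.exists_P2_lt_of_par_eq_par t ht (Finset.mem_filter.mp hf).2
      (Finset.mem_filter.mp hg).2 hfg
    exact (hmin' Γ').not_gt hlt
end
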